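/- Failure of Hartogs extension: let X ⊂ ℂ⁴ be the closure of the image of the map ℂ² → ℂ⁴, (s,t) ↦ (s⁴, s³t, st³, t⁴). The function given on X minus the origin locally by b²/a, ac/b, bd/c, c²/d (these agree on overlaps and every nonzero point of X has a neighborhood where one of them is defined) is a regular function on X ∖ {0} that does not extend to a regular function on X. -/

import Mathlib

/-!
On `X` the patched function is `s²t²`. An extension `P` would make `P(s⁴, s³t, st³, t⁴) = s²t²`
an identity of polynomials in `s, t`. But the substitution sends the monomial `aⁱbʲcᵏdˡ` to the
monomial `s^(4i+3j+k) t^(j+3k+4l)`, and no such exponent equals `(2, 2)`, so the pullback of `P`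
has no `s²t²` term.
-/

open MvPolynomial

/-- The affine surface `X ⊂ ℂ⁴` parametrized by `(s,t) ↦ (s⁴, s³t, st³, t⁴)`
(its image is Zariski closed, so it equals its closure). -/
def monomialSurface : Set (Fin 4 → ℂ) :=
  {x | ∃ s t : ℂ, x = ![s ^ 4, s ^ 3 * t, s * t ^ 3, t ^ 4]}

section MonomialSubstitution

variable {R σ τ : Type*} [CommSemiring R]

lemma bind₁_monomial_monomial (e : σ → τ →₀ ℕ) (m : σ →₀ ℕ) (c : R) :
    bind₁ (fun i => monomial (e i) (1 : R)) (monomial m c) =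
      monomial (m.sum fun i k => k • e i) c := by
  simp only [← aeval_eq_bind₁, aeval_monomial, monomial_finsupp_sum_index, monomial_pow, one_pow,
    algebraMap_eq]

lemma coeff_bind₁_monomial_eq_zero (e : σ → τ →₀ ℕ) {n : τ →₀ ℕ}
    (hn : ∀ m : σ →₀ ℕ, (m.sum fun i k => k • e i) ≠ n) (P : MvPolynomial σ R) :
    coeff n (bind₁ (fun i => monomial (e i) (1 : R)) P) = 0 := by
  classical
  induction P using induction_on' with
  | monomial m c => rw [bind₁_monomial_monomial, coeff_monomial, if_neg (hn m)]
  | add p q hp hq => rw [map_add, coeff_add, hp, hq, add_zero]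

end MonomialSubstitution

def surfacePoint (s t : ℂ) : Fin 4 → ℂ := ![s ^ 4, s ^ 3 * t, s * t ^ 3, t ^ 4]

noncomputable def surfaceExponent : Fin 4 → Fin 2 →₀ ℕ :=
  ![.single 0 4, .single 0 3 + .single 1 1, .single 0 1 + .single 1 3, .single 1 4]

lemma sum_smul_surfaceExponent_ne (m : Fin 4 →₀ ℕ) :
    (m.sum fun i k => k • surfaceExponent i) ≠ .single 0 2 + .single 1 2 := by
  intro h
  have h0 : m 0 * 4 + m 1 * 3 + m 2 = 2 := by
    simpa [Finsupp.sum_fintype, Fin.sum_univ_four, surfaceExponent] using DFunLike.congr_fun h 0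
  have h1 : m 1 + m 2 * 3 + m 3 * 4 = 2 := by
    simpa [Finsupp.sum_fintype, Fin.sum_univ_four, surfaceExponent] using DFunLike.congr_fun h 1
  have : m 0 = 0 := by omega
  have : m 1 = 0 := by omega
  omega

lemma eval_bind₁_surfaceExponent (P : MvPolynomial (Fin 4) ℂ) (x : Fin 2 → ℂ) :
    eval x (bind₁ (fun i => monomial (surfaceExponent i) (1 : ℂ)) P) =
      eval (surfacePoint (x 0) (x 1)) P := by
  refine (eval₂Hom_bind₁ (RingHom.id ℂ) x _ P).trans
    (congrArg (fun y => eval y P) (funext fun i => ?_))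
  fin_cases i <;> simp [surfaceExponent, surfacePoint, Finsupp.prod_add_index, pow_add]

theorem not_exists_poly_eval_surfacePoint :
    ¬ ∃ P : MvPolynomial (Fin 4) ℂ,
      ∀ s t : ℂ, s ≠ 0 → t ≠ 0 → eval (surfacePoint s t) P = s ^ 2 * t ^ 2 := by
  rintro ⟨P, hP⟩
  have hpullback : bind₁ (fun i => monomial (surfaceExponent i) (1 : ℂ)) P =
      monomial (.single 0 2 + .single 1 2) 1 := by
    refine funext_set (fun _ => {0}ᶜ) (fun _ => (Set.finite_singleton 0).infinite_compl)
      fun x hx => ?_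
    rw [eval_bind₁_surfaceExponent, hP _ _ (hx 0 trivial) (hx 1 trivial)]
    simp [eval_monomial, Finsupp.prod_add_index, pow_add]
  have hcoeff := congrArg (coeff (.single 0 2 + .single 1 2)) hpullback
  rw [coeff_bind₁_monomial_eq_zero _ sum_smul_surfaceExponent_ne, coeff_monomial, if_pos rfl]
    at hcoeff
  exact zero_ne_one hcoeff

noncomputable def hartogsF : (Fin 4 → ℂ) → ℂ :=
  fun x => if x 0 = 0 then x 2 ^ 2 / x 3 else x 1 ^ 2 / x 0

lemma hartogsF_surfacePoint (s t : ℂ) : hartogsF (surfacePoint s t) = s ^ 2 * t ^ 2 := by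
  by_cases hs : s = 0
  · simp [hartogsF, surfacePoint, hs]
  · simp only [hartogsF, surfacePoint, Matrix.cons_val_zero, Matrix.cons_val_one, ne_eq,
      pow_eq_zero_iff, OfNat.ofNat_ne_zero, not_false_eq_true, hs, ↓reduceIte]
    field_simp

lemma surfacePoint_local_expressions (s t : ℂ) :
    let x := surfacePoint s t
    (x 0 ≠ 0 → s ^ 2 * t ^ 2 = x 1 ^ 2 / x 0) ∧
    (x 1 ≠ 0 → s ^ 2 * t ^ 2 = x 0 * x 2 / x 1) ∧
    (x 2 ≠ 0 → s ^ 2 * t ^ 2 = x 1 * x 3 / x 2) ∧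
    (x 3 ≠ 0 → s ^ 2 * t ^ 2 = x 2 ^ 2 / x 3) := by
  simp only [surfacePoint]
  refine ⟨fun h => ?_, fun h => ?_, fun h => ?_, fun h => ?_⟩ <;>
    simp only [Matrix.cons_val, Matrix.cons_val_zero, Matrix.cons_val_one, ne_eq, mul_eq_zero,
      pow_eq_zero_iff, OfNat.ofNat_ne_zero, not_false_eq_true, not_or] at h ⊢ <;>
    field_simp

theorem stmt_9 :
    ∃ f : (Fin 4 → ℂ) → ℂ,
      (∀ x ∈ monomialSurface, x ≠ 0 →
        (x 0 ≠ 0 → f x = (x 1) ^ 2 / x 0) ∧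
        (x 1 ≠ 0 → f x = x 0 * x 2 / x 1) ∧
        (x 2 ≠ 0 → f x = x 1 * x 3 / x 2) ∧
        (x 3 ≠ 0 → f x = (x 2) ^ 2 / x 3)) ∧
      ¬ ∃ P : MvPolynomial (Fin 4) ℂ,
          ∀ x ∈ monomialSurface, x ≠ 0 → f x = eval x P := by
  refine ⟨hartogsF, ?_, ?_⟩
  · intro x hx _
    obtain ⟨s, t, rfl⟩ : ∃ s t, x = surfacePoint s t := hx
    rw [hartogsF_surfacePoint]
    exact surfacePoint_local_expressions s t
  · rintro ⟨P, hP⟩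
    refine not_exists_poly_eval_surfacePoint ⟨P, fun s t hs _ => ?_⟩
    have hx : surfacePoint s t ≠ 0 := fun h => hs (by simpa [surfacePoint] using congrFun h 0)
    rw [← hP (surfacePoint s t) ⟨s, t, rfl⟩ hx, hartogsF_surfacePoint]
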